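/- Let T₀ < 0 and let (H, φ) solve the EdGB FLRW system on (T₀, 0] with H(0) = β > 0, φ(0) = 0 and φ'(0) < 0. Suppose that for all t ∈ (T₀, 0): H'(t) − 3·H(t)^4·exp(φ(t)) + H(t)^2 < 0, H'(t) − (12/5)·H(t)^4·exp(φ(t)) + 3·H(t)^2 > 0, and H'(t) − H(t)^2 + 3·exp(−φ(t)) > 0. Then for all t ∈ (T₀, 0): (i) H(t) < min{ (e^{6γt}·(1/β^2 − 4β/(5γ) + 2θ/(15γ^2)) − 2(−6βγ + θ + 6γθt)/(15γ^2))^{−1/2}, γ/(1 − 3β^3 t) }; (ii) H(t) > [β^{−1/4} − (β^{−1/4}/(4(m+1)))·(1 − (1 − 3β^3 t)^{m+1})]^{−4} > 0; (iii) ln((1 − 3β^3 t)^2) < φ(t) < (√6·γ/(3β^3))·ln(1 − 3β^3 t) + (2β^3/(4γ + β^3))·((1 − 3β^3 t)^{(4γ + β^3)/β^3} − 1). -/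

import Mathlib

/-- The EdGB FLRW system on a set `I ⊆ ℝ`: `H` is continuously differentiable and
`φ` twice continuously differentiable on `I`, and for every `t ∈ I` the Hamiltonian
constraint `3H² − 3e^φ φ' H³ = φ'²/2` and the scalar field equation
`φ'' = −3Hφ' − 3e^φ H²(H² + H')` hold. -/
def EdGB (H φ : ℝ → ℝ) (I : Set ℝ) : Prop :=
  ContDiffOn ℝ 1 H I ∧ ContDiffOn ℝ 2 φ I ∧
  (∀ t ∈ I, 3 * H t ^ 2 - 3 * Real.exp (φ t) * deriv φ t * H t ^ 3 = (deriv φ t) ^ 2 / 2) ∧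
  (∀ t ∈ I, deriv (deriv φ) t =
      -3 * H t * deriv φ t - 3 * Real.exp (φ t) * H t ^ 2 * (H t ^ 2 + deriv H t))

noncomputable section

/-- `γ = (3β³ + √(9β⁶+12))/2`. -/
def gammaβ (β : ℝ) : ℝ := (3 * β ^ 3 + Real.sqrt (9 * β ^ 6 + 12)) / 2

/-- `θ = 2(9β⁶ + β³√(9β⁶+12))/(√(9β⁶+12) + 3β³)²`. -/
def thetaβ (β : ℝ) : ℝ :=
  2 * (9 * β ^ 6 + β ^ 3 * Real.sqrt (9 * β ^ 6 + 12)) /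
    (Real.sqrt (9 * β ^ 6 + 12) + 3 * β ^ 3) ^ 2

/-- `m = (107√(9β⁶+12) + 309β³)/(60β³)`. -/
def mβ (β : ℝ) : ℝ := (107 * Real.sqrt (9 * β ^ 6 + 12) + 309 * β ^ 3) / (60 * β ^ 3)

/-- The upper bound for `H` on the past evolution. -/
def Hupper (β t : ℝ) : ℝ :=
  min ((Real.exp (6 * gammaβ β * t) *
        (1 / β ^ 2 - 4 * β / (5 * gammaβ β) + 2 * thetaβ β / (15 * (gammaβ β) ^ 2)) -
      2 * (-6 * β * gammaβ β + thetaβ β + 6 * gammaβ β * thetaβ β * t) /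
        (15 * (gammaβ β) ^ 2)) ^ (-(1 / 2) : ℝ))
    (gammaβ β / (1 - 3 * β ^ 3 * t))

/-- The lower bound for `H` on the past evolution. -/
def Hlower (β t : ℝ) : ℝ :=
  (β ^ (-(1 / 4) : ℝ) -
      β ^ (-(1 / 4) : ℝ) / (4 * (mβ β + 1)) *
        (1 - (1 - 3 * β ^ 3 * t) ^ (mβ β + 1))) ^ (-4 : ℝ)

/-- The upper bound for `φ` on the past evolution. -/
def phiupper (β t : ℝ) : ℝ :=
  Real.sqrt 6 * gammaβ β / (3 * β ^ 3) * Real.log (1 - 3 * β ^ 3 * t) +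
    2 * β ^ 3 / (4 * gammaβ β + β ^ 3) *
      ((1 - 3 * β ^ 3 * t) ^ ((4 * gammaβ β + β ^ 3) / β ^ 3) - 1)

end

/-!
Every bound comes from a comparison argument on `(T₀, 0]`, run backwards from `t = 0`, where
`x = 1 - 3β³t ≥ 1`. The Hamiltonian constraint is a quadratic in `φ'`; since `φ'` cannot vanish
while `H > 0`, `φ'` stays the negative root, so `-6e^φH³ - √6 H ≤ φ' < -6e^φH³`. With `D₃` this
makes `e^φH²` and `e^φH + θt` decrease, and then `φ - 2 log x` stays positive. With `D₄` the
product `xH` cannot reach `γ` (at `xH = γ` its derivative is positive because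
`12γ⁴/5 - 4γ² + 3 > 0`), `1/H²` stays above the solution `U` of `U' = 6γU - (24/5)(β - θt)`, and
`e^φH^{11/4}x^{-m}`, `e^φH³x^{-4γ/β³}` increase. Fed back into `D₃` and into the lower bound for
`φ'`, the last two estimates integrate to the lower bound for `H` and the upper bound for `φ`.
-/

open Set Topology Real

section Comparison

variable {f f' : ℝ → ℝ} {a b : ℝ}

lemma HasDerivAt.nonpos_of_le_right {c d : ℝ} (hf : HasDerivAt f d c) (hcb : c < b)
    (hle : ∀ s ∈ Ioc c b, f s ≤ f c) : d ≤ 0 := by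
  refine le_of_tendsto (hf.tendsto_slope.mono_left
    (nhdsWithin_mono c (fun _ h ↦ ne_of_gt h : Ioi c ⊆ {c}ᶜ))) ?_
  filter_upwards [Ioc_mem_nhdsGT hcb] with s hs
  rw [slope_def_field]
  exact div_nonpos_of_nonpos_of_nonneg (sub_nonpos.2 (hle s hs)) (sub_pos.2 hs.1).le

lemma neg_of_hasDerivAt_pos_of_eq_zero {t : ℝ} (ht : t ∈ Ioo a b)
    (hf : ContinuousOn f (Ioc a b)) (hf' : ∀ x ∈ Ioo a b, HasDerivAt f (f' x) x) (hb : f b < 0)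
    (hzero : ∀ x ∈ Ioo a b, f x = 0 → 0 < f' x) : f t < 0 := by
  by_contra! hft
  have hcont : ContinuousOn f (Icc t b) := hf.mono fun s hs ↦ ⟨ht.1.trans_le hs.1, hs.2⟩
  set Z := Icc t b ∩ f ⁻¹' {0}
  have hZ : IsClosed Z := hcont.preimage_isClosed_of_isClosed isClosed_Icc isClosed_singleton
  obtain ⟨z, hz, hfz⟩ := intermediate_value_Icc' ht.2.le hcont ⟨hb.le, hft⟩
  have hbdd : BddAbove Z := ⟨b, fun s hs ↦ hs.1.2⟩
  have hcZ : sSup Z ∈ Z := hZ.csSup_mem ⟨z, hz, hfz⟩ hbdd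
  set c := sSup Z
  have hcb : c < b := lt_of_le_of_ne hcZ.1.2 fun h ↦ by
    have : f c = 0 := hcZ.2
    rw [h] at this; linarith
  have hneg : ∀ s ∈ Ioc c b, f s < 0 := by
    intro s hs
    by_contra! hfs
    obtain ⟨w, hw, hfw⟩ := intermediate_value_Icc' hs.2
      (hcont.mono (Icc_subset_Icc (hcZ.1.1.trans hs.1.le) le_rfl)) ⟨hb.le, hfs⟩
    have : w ≤ c := le_csSup hbdd ⟨⟨hcZ.1.1.trans (hs.1.le.trans hw.1), hw.2⟩, hfw⟩
    linarith [hw.1, hs.1]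
  have hcI : c ∈ Ioo a b := ⟨ht.1.trans_le hcZ.1.1, hcb⟩
  have hfc : f c = 0 := hcZ.2
  have := (hf' c hcI).nonpos_of_le_right hcb fun s hs ↦ hfc ▸ (hneg s hs).le
  linarith [hzero c hcI hfc]

lemma neg_of_hasDerivAt_pos_of_nonneg {t : ℝ} (ht : t ∈ Ioo a b)
    (hf : ContinuousOn f (Ioc a b)) (hf' : ∀ x ∈ Ioo a b, HasDerivAt f (f' x) x) (hb : f b ≤ 0)
    (hpos : ∀ x ∈ Ioo a b, 0 ≤ f x → 0 < f' x) : f t < 0 := by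
  by_contra! hft
  have hnonneg : ∀ s ∈ Ioo t b, 0 ≤ f s := by
    intro s hs
    by_contra! hfs
    exact (neg_of_hasDerivAt_pos_of_eq_zero ⟨ht.1, hs.1⟩
      (hf.mono (Ioc_subset_Ioc_right hs.2.le)) (fun x hx ↦ hf' x ⟨hx.1, hx.2.trans hs.2⟩) hfs
      (fun x hx h0 ↦ hpos x ⟨hx.1, hx.2.trans hs.2⟩ h0.ge)).not_ge hft
  have hmono : StrictMonoOn f (Icc t b) :=
    strictMonoOn_of_hasDerivWithinAt_pos (convex_Icc t b)
      (hf.mono fun s hs ↦ ⟨ht.1.trans_le hs.1, hs.2⟩)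
      (fun x hx ↦ by
        rw [interior_Icc] at hx
        exact (hf' x ⟨ht.1.trans hx.1, hx.2⟩).hasDerivWithinAt)
      (fun x hx ↦ by
        rw [interior_Icc] at hx
        exact hpos x ⟨ht.1.trans hx.1, hx.2⟩ (hnonneg x hx))
  linarith [hmono (left_mem_Icc.2 ht.2.le) (right_mem_Icc.2 ht.2.le) ht.2]

lemma lt_of_hasDerivAt_neg {t : ℝ} (ht : t ∈ Ioo a b) (hf : ContinuousOn f (Ioc a b))
    (hf' : ∀ x ∈ Ioo a b, HasDerivAt f (f' x) x) (hneg : ∀ x ∈ Ioo a b, f' x < 0) :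
    f b < f t := by
  have hanti : StrictAntiOn f (Ioc a b) :=
    strictAntiOn_of_hasDerivWithinAt_neg (convex_Ioc a b) hf
      (fun x hx ↦ by
        rw [interior_Ioc] at hx
        exact (hf' x hx).hasDerivWithinAt)
      (fun x hx ↦ by
        rw [interior_Ioc] at hx
        exact hneg x hx)
  exact hanti ⟨ht.1, ht.2.le⟩ ⟨ht.1.trans ht.2, le_rfl⟩ ht.2

lemma lt_of_hasDerivAt_pos {t : ℝ} (ht : t ∈ Ioo a b) (hf : ContinuousOn f (Ioc a b))
    (hf' : ∀ x ∈ Ioo a b, HasDerivAt f (f' x) x) (hpos : ∀ x ∈ Ioo a b, 0 < f' x) :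
    f t < f b := by
  simpa using lt_of_hasDerivAt_neg ht hf.neg (fun x hx ↦ (hf' x hx).neg)
    (fun x hx ↦ neg_neg_iff_pos.2 (hpos x hx))

end Comparison

section Constants

variable {β : ℝ}

lemma sqrt_disc_eq : √(9 * β ^ 6 + 12) = 2 * gammaβ β - 3 * β ^ 3 := by
  rw [gammaβ]; ring

lemma gammaβ_sq : gammaβ β ^ 2 = 3 + 3 * β ^ 3 * gammaβ β := by
  have h : √(9 * β ^ 6 + 12) ^ 2 = 9 * β ^ 6 + 12 := sq_sqrt (by positivity)
  rw [sqrt_disc_eq] at h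
  linear_combination h / 4

lemma three_mul_pow_three_lt_gammaβ : 3 * β ^ 3 < gammaβ β := by
  have h : 3 * β ^ 3 < √(9 * β ^ 6 + 12) := lt_sqrt_of_sq_lt (by nlinarith)
  rw [sqrt_disc_eq] at h
  linarith

lemma gammaβ_pos : 0 < gammaβ β := by
  have h : -(3 * β ^ 3) < √(9 * β ^ 6 + 12) := lt_sqrt_of_sq_lt (by nlinarith)
  rw [sqrt_disc_eq] at h
  linarith

lemma two_mul_le_gammaβ (hβ : 0 < β) : 2 * β ≤ gammaβ β := by
  have h3 := three_mul_pow_three_lt_gammaβ (β := β)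
  have hγ := gammaβ_pos (β := β)
  nlinarith [gammaβ_sq (β := β), sq_nonneg (β - 2 / 3), mul_pos hβ hγ]

lemma lt_gammaβ (hβ : 0 < β) : β < gammaβ β := by
  linarith [two_mul_le_gammaβ hβ]

lemma thetaβ_eq : thetaβ β = β ^ 3 * (gammaβ β + 3 * β ^ 3) / gammaβ β ^ 2 := by
  have hγ := gammaβ_pos (β := β)
  rw [thetaβ, sqrt_disc_eq]
  field_simp
  ring

lemma thetaβ_pos (hβ : 0 < β) : 0 < thetaβ β := by
  have := gammaβ_pos (β := β)
  rw [thetaβ_eq]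
  positivity

lemma thetaβ_lt_sq (hβ : 0 < β) : thetaβ β < β ^ 2 := by
  have hγ := gammaβ_pos (β := β)
  have h2 := two_mul_le_gammaβ hβ
  have h3 := three_mul_pow_three_lt_gammaβ (β := β)
  rw [thetaβ_eq, div_lt_iff₀ (by positivity)]
  nlinarith [mul_le_mul_of_nonneg_left h2 (by positivity : 0 ≤ β ^ 2 * gammaβ β),
    mul_lt_mul_of_pos_left h3 (by positivity : 0 < β ^ 3)]

lemma three_mul_mβ_mul (hβ : β ≠ 0) :
    3 * mβ β * β ^ 3 = 107 / 10 * gammaβ β - 3 / 5 * β ^ 3 := by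
  rw [mβ, sqrt_disc_eq]
  field_simp
  ring

lemma mβ_pos (hβ : 0 < β) : 0 < mβ β := by
  rw [mβ]
  positivity

lemma sqrt_six_lt : √6 < 49 / 20 := by
  rw [sqrt_lt' (by norm_num)]; norm_num

/-- This inequality is what fixes the exponent `m` in the lower bound on `H`. -/
lemma sqrt_six_add_mul_gammaβ_le (hβ : 0 < β) :
    (√6 + 33 / 4 - 3 / 5 * β ^ 2) * gammaβ β ≤ 3 * mβ β * β ^ 3 := by
  rw [three_mul_mβ_mul hβ.ne']
  nlinarith [sqrt_six_lt, lt_gammaβ hβ, gammaβ_pos (β := β), pow_pos hβ 2]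

end Constants

section Constraint

variable {a h ψ : ℝ}

lemma lt_neg_six_mul_of_sq_add_eq (hh : 0 < h) (hψ : ψ < 0)
    (hq : ψ ^ 2 + 6 * a * ψ = 6 * h ^ 2) : ψ < -(6 * a) := by
  nlinarith [pow_pos hh 2]

lemma neg_six_mul_sub_le_of_sq_add_eq (ha : 0 ≤ a) (hh : 0 ≤ h)
    (hq : ψ ^ 2 + 6 * a * ψ = 6 * h ^ 2) : -(6 * a) - √6 * h ≤ ψ := by
  have h6 : √6 ^ 2 = 6 := sq_sqrt (by norm_num)
  have hsq : (ψ + 3 * a) ^ 2 ≤ (3 * a + √6 * h) ^ 2 := by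
    nlinarith [mul_nonneg (mul_nonneg ha (sqrt_nonneg 6)) hh]
  linarith [(abs_le_of_sq_le_sq' hsq (by positivity)).1]

end Constraint

section InvSqBound

variable {β t : ℝ}

/-- The solution of `U' = 6γU - (24/5)(β - θt)` with `U(0) = β⁻²`. -/
noncomputable def invSqBound (β t : ℝ) : ℝ :=
  exp (6 * gammaβ β * t) *
      (1 / β ^ 2 - 4 * β / (5 * gammaβ β) + 2 * thetaβ β / (15 * gammaβ β ^ 2)) -
    2 * (-6 * β * gammaβ β + thetaβ β + 6 * gammaβ β * thetaβ β * t) / (15 * gammaβ β ^ 2)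

lemma invSqBound_zero : invSqBound β 0 = (β ^ 2)⁻¹ := by
  have : 4 * β / (5 * gammaβ β) = 2 * (6 * β * gammaβ β) / (15 * gammaβ β ^ 2) := by
    have := (gammaβ_pos (β := β)).ne'
    field_simp
    ring
  rw [invSqBound, mul_zero, exp_zero, one_mul, this]
  ring

lemma hasDerivAt_invSqBound :
    HasDerivAt (invSqBound β) (6 * gammaβ β * invSqBound β t - 24 / 5 * (β - thetaβ β * t)) t := by
  have := (gammaβ_pos (β := β)).ne'
  refine (((hasDerivAt_id t).const_mul (6 * gammaβ β)).exp.mul_const _ |>.fun_sub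
    ((((hasDerivAt_id t).const_mul (6 * gammaβ β * thetaβ β)).const_add
      (-6 * β * gammaβ β + thetaβ β)).const_mul 2 |>.div_const _)).congr_deriv ?_
  rw [invSqBound]
  simp only [id]
  field_simp
  ring

lemma invSqBound_pos (hβ : 0 < β) (ht : t ≤ 0) : 0 < invSqBound β t := by
  have hγ := gammaβ_pos (β := β)
  have hθ := thetaβ_lt_sq hβ
  have hθ0 := thetaβ_pos hβ
  have hC : 0 < 1 / β ^ 2 - 4 * β / (5 * gammaβ β) + 2 * thetaβ β / (15 * gammaβ β ^ 2) := by
    have : 4 * β / (5 * gammaβ β) < 1 / β ^ 2 := by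
      rw [div_lt_div_iff₀ (by positivity) (by positivity)]
      nlinarith [three_mul_pow_three_lt_gammaβ (β := β), pow_pos hβ 3]
    have : 0 < 2 * thetaβ β / (15 * gammaβ β ^ 2) := by positivity
    linarith
  have : -6 * β * gammaβ β + thetaβ β + 6 * gammaβ β * thetaβ β * t ≤ 0 := by
    nlinarith [lt_gammaβ hβ, mul_nonpos_of_nonneg_of_nonpos
      (by positivity : 0 ≤ 6 * gammaβ β * thetaβ β) ht]
  rw [invSqBound]
  have := div_nonpos_of_nonpos_of_nonneg (by linarith : 2 * (-6 * β * gammaβ β + thetaβ β +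
    6 * gammaβ β * thetaβ β * t) ≤ 0) (by positivity : (0 : ℝ) ≤ 15 * gammaβ β ^ 2)
  nlinarith [mul_pos (exp_pos (6 * gammaβ β * t)) hC]

end InvSqBound

section ScaleFactor

variable {β t : ℝ}

lemma one_le_one_sub_mul (hβ : 0 < β) (ht : t ≤ 0) : 1 ≤ 1 - 3 * β ^ 3 * t := by
  nlinarith [pow_pos hβ 3]

lemma one_sub_mul_pos (hβ : 0 < β) (ht : t ≤ 0) : 0 < 1 - 3 * β ^ 3 * t :=
  zero_lt_one.trans_le (one_le_one_sub_mul hβ ht)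

lemma hasDerivAt_one_sub_mul : HasDerivAt (fun u ↦ 1 - 3 * β ^ 3 * u) (-(3 * β ^ 3)) t := by
  simpa using ((hasDerivAt_id t).const_mul (3 * β ^ 3)).const_sub 1

end ScaleFactor

/-- The hypotheses of the theorem in the form used below: the Hamiltonian constraint as a
quadratic in `φ'`, and the sign conditions `D₃ < 0`, `D₄ > 0` solved for `H'`. -/
structure PastSolution (T₀ β : ℝ) (H φ : ℝ → ℝ) : Prop where
  continuousOn_H : ContinuousOn H (Ioc T₀ 0)
  continuousOn_φ : ContinuousOn φ (Ioc T₀ 0)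
  continuousOn_deriv_φ : ContinuousOn (deriv φ) (Ioc T₀ 0)
  hasDerivAt_H : ∀ t ∈ Ioo T₀ 0, HasDerivAt H (deriv H t) t
  hasDerivAt_φ : ∀ t ∈ Ioo T₀ 0, HasDerivAt φ (deriv φ t) t
  constraint : ∀ t ∈ Ioo T₀ 0,
    deriv φ t ^ 2 + 6 * (exp (φ t) * H t ^ 3) * deriv φ t = 6 * H t ^ 2
  H_zero : H 0 = β
  φ_zero : φ 0 = 0
  deriv_φ_zero : deriv φ 0 < 0
  deriv_H_lt : ∀ t ∈ Ioo T₀ 0, deriv H t < 3 * H t ^ 4 * exp (φ t) - H t ^ 2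
  deriv_H_gt : ∀ t ∈ Ioo T₀ 0, 12 / 5 * H t ^ 4 * exp (φ t) - 3 * H t ^ 2 < deriv H t

namespace PastSolution

variable {T₀ β : ℝ} {H φ : ℝ → ℝ}

theorem of_edGB (hsys : EdGB H φ (Ioc T₀ 0)) (h0 : H 0 = β) (hφ0 : φ 0 = 0)
    (hφ'0 : deriv φ 0 < 0)
    (hD3 : ∀ t ∈ Ioo T₀ 0, deriv H t - 3 * H t ^ 4 * exp (φ t) + H t ^ 2 < 0)
    (hD4 : ∀ t ∈ Ioo T₀ 0, deriv H t - (12 / 5) * H t ^ 4 * exp (φ t) + 3 * H t ^ 2 > 0) :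
    PastSolution T₀ β H φ := by
  obtain ⟨hH, hφ, hcon, -⟩ := hsys
  have hnhds : ∀ t ∈ Ioo T₀ 0, Ioc T₀ 0 ∈ 𝓝 t := fun t ht ↦ Ioc_mem_nhds ht.1 ht.2
  have hderivWithin : EqOn (derivWithin φ (Ioc T₀ 0)) (deriv φ) (Ioc T₀ 0) := by
    intro t ht
    rcases ht.2.lt_or_eq with ht0 | rfl
    · exact derivWithin_of_mem_nhds (hnhds t ⟨ht.1, ht0⟩)
    -- `deriv φ 0 ≠ 0` is not a junk value, so `φ` is differentiable at `0`
    · exact (differentiableAt_of_deriv_ne_zero hφ'0.ne).derivWithin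
        (uniqueDiffOn_Ioc T₀ 0 _ ht)
  refine ⟨hH.continuousOn, hφ.continuousOn,
    (hφ.continuousOn_derivWithin (uniqueDiffOn_Ioc T₀ 0) (by norm_num)).congr hderivWithin.symm,
    fun t ht ↦ ((hH.contDiffAt (hnhds t ht)).differentiableAt one_ne_zero).hasDerivAt,
    fun t ht ↦ ((hφ.contDiffAt (hnhds t ht)).differentiableAt (by norm_num)).hasDerivAt,
    fun t ht ↦ by linear_combination (-2) * hcon t (Ioo_subset_Ioc_self ht),
    h0, hφ0, hφ'0, fun t ht ↦ by linarith [hD3 t ht], fun t ht ↦ by linarith [hD4 t ht]⟩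

variable (S : PastSolution T₀ β H φ) (hβ : 0 < β)
include S hβ

theorem H_pos : ∀ t ∈ Ioo T₀ 0, 0 < H t := by
  intro t ht
  have := neg_of_hasDerivAt_pos_of_eq_zero ht (f := fun u ↦ -H u) S.continuousOn_H.neg
    (fun u hu ↦ (S.hasDerivAt_H u hu).neg) (by simpa [S.H_zero] using hβ)
    (fun u hu h0 ↦ by
      have := S.deriv_H_lt u hu
      rw [neg_eq_zero.1 h0] at this
      norm_num at this
      linarith)
  exact neg_neg_iff_pos.1 this

theorem deriv_φ_neg : ∀ t ∈ Ioo T₀ 0, deriv φ t < 0 := by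
  intro t ht
  by_contra! hψt
  obtain ⟨c, hc, hψc⟩ := intermediate_value_Icc' ht.2.le
    (S.continuousOn_deriv_φ.mono fun u hu ↦ ⟨ht.1.trans_le hu.1, hu.2⟩) ⟨S.deriv_φ_zero.le, hψt⟩
  rcases hc.2.lt_or_eq with hc0 | rfl
  · have hcI : c ∈ Ioo T₀ 0 := ⟨ht.1.trans_le hc.1, hc0⟩
    have := S.constraint c hcI
    rw [hψc] at this
    nlinarith [S.H_pos hβ c hcI]
  · exact S.deriv_φ_zero.ne hψc

theorem deriv_φ_lt_neg_six_mul : ∀ t ∈ Ioo T₀ 0, deriv φ t < -(6 * (exp (φ t) * H t ^ 3)) :=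
  fun t ht ↦ lt_neg_six_mul_of_sq_add_eq (S.H_pos hβ t ht) (S.deriv_φ_neg hβ t ht)
    (S.constraint t ht)

theorem neg_six_mul_sub_le_deriv_φ :
    ∀ t ∈ Ioo T₀ 0, -(6 * (exp (φ t) * H t ^ 3)) - √6 * H t ≤ deriv φ t := by
  intro t ht
  have := S.H_pos hβ t ht
  exact neg_six_mul_sub_le_of_sq_add_eq (by positivity) this.le (S.constraint t ht)

theorem sq_lt_exp_mul_sq : ∀ t ∈ Ioo T₀ 0, β ^ 2 < exp (φ t) * H t ^ 2 := by
  intro t ht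
  have := lt_of_hasDerivAt_neg ht (f := fun u ↦ exp (φ u) * H u ^ 2)
    (f' := fun u ↦ exp (φ u) * H u * (deriv φ u * H u + 2 * deriv H u))
    (by have := S.continuousOn_φ; have := S.continuousOn_H; fun_prop)
    (fun u hu ↦ ((S.hasDerivAt_φ u hu).exp.fun_mul ((S.hasDerivAt_H u hu).fun_pow 2)).congr_deriv
      (by push_cast; ring))
    (fun u hu ↦ by
      have hH := S.H_pos hβ u hu
      have hψ := mul_lt_mul_of_pos_right (S.deriv_φ_lt_neg_six_mul hβ u hu) hH
      have : deriv φ u * H u + 2 * deriv H u < 0 := by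
        nlinarith [S.deriv_H_lt u hu, pow_pos hH 2]
      exact mul_neg_of_pos_of_neg (by positivity) this)
  simpa [S.φ_zero, S.H_zero] using this

theorem sub_mul_lt_exp_mul : ∀ t ∈ Ioo T₀ 0, β - thetaβ β * t < exp (φ t) * H t := by
  intro t ht
  have := lt_of_hasDerivAt_neg ht (f := fun u ↦ exp (φ u) * H u - (β - thetaβ β * u))
    (f' := fun u ↦ exp (φ u) * (deriv φ u * H u + deriv H u) + thetaβ β)
    (by have := S.continuousOn_φ; have := S.continuousOn_H; fun_prop)
    (fun u hu ↦ ((S.hasDerivAt_φ u hu).exp.fun_mul (S.hasDerivAt_H u hu)).fun_sub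
      (((hasDerivAt_id u).const_mul (thetaβ β)).const_sub β) |>.congr_deriv (by ring))
    (fun u hu ↦ by
      have hH := S.H_pos hβ u hu
      have hE := exp_pos (φ u)
      have hψ := mul_lt_mul_of_pos_right (S.deriv_φ_lt_neg_six_mul hβ u hu) hH
      have hP := S.sq_lt_exp_mul_sq hβ u hu
      have : exp (φ u) * (deriv φ u * H u + deriv H u) <
          -(3 * (exp (φ u) * H u ^ 2) ^ 2) - exp (φ u) * H u ^ 2 := by
        nlinarith [mul_lt_mul_of_pos_left (add_lt_add hψ (S.deriv_H_lt u hu)) hE]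
      nlinarith [thetaβ_lt_sq hβ, sq_nonneg (exp (φ u) * H u ^ 2)])
  simpa [S.φ_zero, S.H_zero] using this

theorem two_mul_log_lt : ∀ t ∈ Ioo T₀ 0, 2 * log (1 - 3 * β ^ 3 * t) < φ t := by
  intro t ht
  have := neg_of_hasDerivAt_pos_of_nonneg ht (f := fun u ↦ 2 * log (1 - 3 * β ^ 3 * u) - φ u)
    (f' := fun u ↦ -(6 * β ^ 3 / (1 - 3 * β ^ 3 * u)) - deriv φ u)
    (by
      have := S.continuousOn_φ
      have : ∀ u ∈ Ioc T₀ 0, 1 - 3 * β ^ 3 * u ≠ 0 := fun u hu ↦ (one_sub_mul_pos hβ hu.2).ne'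
      fun_prop (disch := assumption))
    (fun u hu ↦ ((hasDerivAt_one_sub_mul.log (one_sub_mul_pos hβ hu.2.le).ne').const_mul
      2).fun_sub (S.hasDerivAt_φ u hu) |>.congr_deriv (by ring))
    (by simp [S.φ_zero])
    (fun u hu hnonneg ↦ by
      have hxu := one_sub_mul_pos hβ hu.2.le
      have hH := S.H_pos hβ u hu
      have hE : exp (φ u) ≤ (1 - 3 * β ^ 3 * u) ^ 2 := by
        rw [← exp_log (pow_pos hxu 2), log_pow, exp_le_exp]
        push_cast; linarith
      have hP := S.sq_lt_exp_mul_sq hβ u hu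
      have hxH : β < (1 - 3 * β ^ 3 * u) * H u := by
        nlinarith [mul_le_mul_of_nonneg_right hE (pow_pos hH 2).le, mul_pos hxu hH]
      have hxA : β ^ 3 < (1 - 3 * β ^ 3 * u) * (exp (φ u) * H u ^ 3) := by
        nlinarith [mul_lt_mul_of_pos_left hxH (by positivity : 0 < exp (φ u) * H u ^ 2),
          mul_lt_mul_of_pos_left hP hβ]
      have : 6 * β ^ 3 / (1 - 3 * β ^ 3 * u) < 6 * (exp (φ u) * H u ^ 3) := by
        rw [div_lt_iff₀ hxu]; linarith
      linarith [S.deriv_φ_lt_neg_six_mul hβ u hu])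
  exact sub_neg.1 this

theorem lt_gammaβ_div : ∀ t ∈ Ioo T₀ 0, H t < gammaβ β / (1 - 3 * β ^ 3 * t) := by
  intro t ht
  have := neg_of_hasDerivAt_pos_of_eq_zero ht (f := fun u ↦ H u - gammaβ β / (1 - 3 * β ^ 3 * u))
    (f' := fun u ↦ deriv H u - 3 * β ^ 3 * gammaβ β / (1 - 3 * β ^ 3 * u) ^ 2)
    (by
      have := S.continuousOn_H
      have : ∀ u ∈ Ioc T₀ 0, 1 - 3 * β ^ 3 * u ≠ 0 := fun u hu ↦ (one_sub_mul_pos hβ hu.2).ne'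
      fun_prop (disch := assumption))
    (fun u hu ↦ (S.hasDerivAt_H u hu).fun_sub ((hasDerivAt_const u (gammaβ β)).fun_div
      hasDerivAt_one_sub_mul (one_sub_mul_pos hβ hu.2.le).ne') |>.congr_deriv (by ring))
    (by simp [S.H_zero, lt_gammaβ hβ])
    (fun u hu hzero ↦ by
      have hxu := one_sub_mul_pos hβ hu.2.le
      have hH := S.H_pos hβ u hu
      have hxH : (1 - 3 * β ^ 3 * u) * H u = gammaβ β := by
        rw [sub_eq_zero] at hzero
        rw [hzero]; field_simp
      have hE : (1 - 3 * β ^ 3 * u) ^ 2 < exp (φ u) := by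
        rw [← exp_log (pow_pos hxu 2), log_pow, exp_lt_exp]
        push_cast; exact S.two_mul_log_lt hβ u hu
      have hx2 : 0 < (1 - 3 * β ^ 3 * u) ^ 2 := by positivity
      have hsq : H u ^ 2 * (1 - 3 * β ^ 3 * u) ^ 2 = gammaβ β ^ 2 := by
        rw [← hxH]; ring
      have h4 : gammaβ β ^ 4 < H u ^ 4 * exp (φ u) * (1 - 3 * β ^ 3 * u) ^ 2 := by
        have := mul_lt_mul_of_pos_left hE (by positivity : 0 < H u ^ 4 * (1 - 3 * β ^ 3 * u) ^ 2)
        nlinarith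
      have hD := mul_lt_mul_of_pos_right (S.deriv_H_gt u hu) hx2
      rw [sub_pos, div_lt_iff₀ hx2]
      nlinarith [gammaβ_sq (β := β), sq_nonneg (gammaβ β ^ 2 - 5 / 6)])
  exact sub_neg.1 this

theorem H_ne_zero : ∀ t ∈ Ioc T₀ 0, H t ≠ 0 := by
  intro t ht
  rcases ht.2.lt_or_eq with ht0 | rfl
  · exact (S.H_pos hβ t ⟨ht.1, ht0⟩).ne'
  · exact S.H_zero ▸ hβ.ne'

theorem H_lt_gammaβ : ∀ t ∈ Ioo T₀ 0, H t < gammaβ β := fun t ht ↦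
  (S.lt_gammaβ_div hβ t ht).trans_le
    (div_le_self gammaβ_pos.le (one_le_one_sub_mul hβ ht.2.le))

theorem invSqBound_lt : ∀ t ∈ Ioo T₀ 0, invSqBound β t < (H t ^ 2)⁻¹ := by
  intro t ht
  have := neg_of_hasDerivAt_pos_of_nonneg ht (f := fun u ↦ invSqBound β u - (H u ^ 2)⁻¹)
    (f' := fun u ↦ 6 * gammaβ β * invSqBound β u - 24 / 5 * (β - thetaβ β * u) +
      2 * deriv H u / H u ^ 3)
    (by
      have := S.continuousOn_H
      have : ∀ u ∈ Ioc T₀ 0, H u ^ 2 ≠ 0 := fun u hu ↦ pow_ne_zero 2 (S.H_ne_zero hβ u hu)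
      have : Continuous (invSqBound β) := by unfold invSqBound; fun_prop
      fun_prop (disch := assumption))
    (fun u hu ↦ by
      have := S.H_pos hβ u hu
      exact hasDerivAt_invSqBound.fun_sub (((S.hasDerivAt_H u hu).fun_pow 2).fun_inv
        (by positivity)) |>.congr_deriv (by field_simp; ring))
    (by simp [S.H_zero, invSqBound_zero])
    (fun u hu hnonneg ↦ by
      have hH := S.H_pos hβ u hu
      have hU := invSqBound_pos hβ hu.2.le
      have hD : 24 / 5 * (exp (φ u) * H u) - 6 / H u < 2 * deriv H u / H u ^ 3 := by
        have : 2 * deriv H u / H u ^ 3 - (24 / 5 * (exp (φ u) * H u) - 6 / H u) =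
            2 * (deriv H u - (12 / 5 * H u ^ 4 * exp (φ u) - 3 * H u ^ 2)) / H u ^ 3 := by
          field_simp; ring
        have := div_pos (mul_pos two_pos (sub_pos.2 (S.deriv_H_gt u hu))) (pow_pos hH 3)
        linarith
      have hinv : 6 / H u < 6 * gammaβ β * invSqBound β u := by
        have : 6 / H u = 6 * H u * (H u ^ 2)⁻¹ := by field_simp
        rw [this]
        have := mul_le_mul_of_nonneg_left (sub_nonneg.1 hnonneg) (by positivity : 0 ≤ 6 * H u)
        nlinarith [mul_lt_mul_of_pos_right (S.H_lt_gammaβ hβ u hu) hU]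
      nlinarith [S.sub_mul_lt_exp_mul hβ u hu])
  exact sub_neg.1 this

/-- With `x = 1 - 3β³t`, the bracket is `Hx` times the derivative of `log (e^φ H^p x^{-k})`. -/
theorem exp_mul_rpow_lt_of_pos {p k : ℝ}
    (hbracket : ∀ u ∈ Ioo T₀ 0, 0 < (deriv φ u * H u + p * deriv H u) * (1 - 3 * β ^ 3 * u) +
      3 * β ^ 3 * k * H u) :
    ∀ t ∈ Ioo T₀ 0, exp (φ t) * H t ^ p < β ^ p * (1 - 3 * β ^ 3 * t) ^ k := by
  intro t ht
  have := lt_of_hasDerivAt_pos ht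
    (f := fun u ↦ φ u + p * log (H u) - k * log (1 - 3 * β ^ 3 * u))
    (f' := fun u ↦ ((deriv φ u * H u + p * deriv H u) * (1 - 3 * β ^ 3 * u) +
      3 * β ^ 3 * k * H u) / (H u * (1 - 3 * β ^ 3 * u)))
    (by
      have := S.continuousOn_φ
      have := S.continuousOn_H
      have := S.H_ne_zero hβ
      have : ∀ u ∈ Ioc T₀ 0, 1 - 3 * β ^ 3 * u ≠ 0 := fun u hu ↦ (one_sub_mul_pos hβ hu.2).ne'
      fun_prop (disch := assumption))
    (fun u hu ↦ by
      have := S.H_pos hβ u hu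
      have := one_sub_mul_pos hβ hu.2.le
      exact ((S.hasDerivAt_φ u hu).fun_add (((S.hasDerivAt_H u hu).log (by positivity)).const_mul
        p)).fun_sub ((hasDerivAt_one_sub_mul.log (by positivity)).const_mul k) |>.congr_deriv
        (by field_simp; ring))
    (fun u hu ↦ div_pos (hbracket u hu) (mul_pos (S.H_pos hβ u hu) (one_sub_mul_pos hβ hu.2.le)))
  simp only [S.φ_zero, S.H_zero, mul_zero, sub_zero, log_one, zero_add] at this
  rw [rpow_def_of_pos (S.H_pos hβ t ht), rpow_def_of_pos hβ,
    rpow_def_of_pos (one_sub_mul_pos hβ ht.2.le), ← exp_add, ← exp_add, exp_lt_exp]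
  linarith

theorem exp_mul_rpow_eleven_quarters_lt : ∀ t ∈ Ioo T₀ 0,
    exp (φ t) * H t ^ ((11 : ℝ) / 4) < β ^ ((11 : ℝ) / 4) * (1 - 3 * β ^ 3 * t) ^ mβ β := by
  refine S.exp_mul_rpow_lt_of_pos hβ fun u hu ↦ ?_
  have hH := S.H_pos hβ u hu
  have hx := one_sub_mul_pos hβ hu.2.le
  have hγ := gammaβ_pos (β := β)
  have hM : 0 < 3 * β ^ 3 * mβ β := by have := mβ_pos hβ; positivity
  have hψ := mul_le_mul_of_nonneg_right (S.neg_six_mul_sub_le_deriv_φ hβ u hu) hH.le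
  have hP := mul_lt_mul_of_pos_right (S.sq_lt_exp_mul_sq hβ u hu) (pow_pos hH 2)
  have hinner : (3 / 5 * β ^ 2 - (√6 + 33 / 4)) * H u ^ 2 <
      deriv φ u * H u + 11 / 4 * deriv H u := by
    nlinarith [S.deriv_H_gt u hu]
  have hy : H u * (1 - 3 * β ^ 3 * u) < gammaβ β :=
    (lt_div_iff₀ hx).1 (S.lt_gammaβ_div hβ u hu)
  -- affine in `y = Hx ∈ (0, γ)`: positive at `y = 0`, nonnegative at `y = γ` by the choice of `m`
  have hlin : 0 < (3 / 5 * β ^ 2 - (√6 + 33 / 4)) * (H u * (1 - 3 * β ^ 3 * u)) +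
      3 * β ^ 3 * mβ β := by
    have hkey := sqrt_six_add_mul_gammaβ_le hβ
    have hyγ := sub_pos.2 hy
    nlinarith [mul_nonneg (mul_pos hH hx).le (by linarith : 0 ≤ (3 / 5 * β ^ 2 -
      (√6 + 33 / 4)) * gammaβ β + 3 * mβ β * β ^ 3), mul_pos hyγ hM]
  nlinarith [mul_lt_mul_of_pos_right hinner hx, mul_pos hH hlin]

theorem exp_mul_pow_three_lt : ∀ t ∈ Ioo T₀ 0,
    exp (φ t) * H t ^ 3 < β ^ 3 * (1 - 3 * β ^ 3 * t) ^ (4 * gammaβ β / β ^ 3) := by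
  have := S.exp_mul_rpow_lt_of_pos hβ (p := 3) (k := 4 * gammaβ β / β ^ 3) fun u hu ↦ by
    have hH := S.H_pos hβ u hu
    have hx := one_sub_mul_pos hβ hu.2.le
    have hψ := mul_le_mul_of_nonneg_right (S.neg_six_mul_sub_le_deriv_φ hβ u hu) hH.le
    have hinner : -(9 + √6) * H u ^ 2 < deriv φ u * H u + 3 * deriv H u := by
      nlinarith [S.deriv_H_gt u hu, (by positivity : 0 ≤ exp (φ u) * H u ^ 4)]
    have hy : H u * (1 - 3 * β ^ 3 * u) < gammaβ β :=
      (lt_div_iff₀ hx).1 (S.lt_gammaβ_div hβ u hu)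
    have h12 : 3 * β ^ 3 * (4 * gammaβ β / β ^ 3) = 12 * gammaβ β := by
      field_simp [hβ.ne']
      ring
    have hs : 0 < (3 - √6) * (gammaβ β * H u) :=
      mul_pos (by linarith [sqrt_six_lt]) (mul_pos gammaβ_pos hH)
    rw [h12]
    nlinarith [mul_lt_mul_of_pos_right hinner hx,
      mul_lt_mul_of_pos_left hy (by positivity : 0 < (9 + √6) * H u)]
  simpa only [rpow_ofNat] using this

theorem rpow_neg_quarter_lt : ∀ t ∈ Ioo T₀ 0, H t ^ (-(1 / 4) : ℝ) < β ^ (-(1 / 4) : ℝ) -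
    β ^ (-(1 / 4) : ℝ) / (4 * (mβ β + 1)) * (1 - (1 - 3 * β ^ 3 * t) ^ (mβ β + 1)) := by
  have hm := mβ_pos hβ
  intro t ht
  have := lt_of_hasDerivAt_neg ht (f := fun u ↦ β ^ (-(1 / 4) : ℝ) -
      β ^ (-(1 / 4) : ℝ) / (4 * (mβ β + 1)) * (1 - (1 - 3 * β ^ 3 * u) ^ (mβ β + 1)) -
      H u ^ (-(1 / 4) : ℝ))
    (f' := fun u ↦ -(3 / 4 * β ^ (-(1 / 4) : ℝ) * β ^ 3 * (1 - 3 * β ^ 3 * u) ^ mβ β) +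
      1 / 4 * deriv H u * H u ^ (-(1 / 4) : ℝ) / H u)
    (continuousOn_const.sub (continuousOn_const.mul (continuousOn_const.sub
      ((by fun_prop : Continuous fun u : ℝ ↦ 1 - 3 * β ^ 3 * u).continuousOn.rpow_const
        fun u hu ↦ Or.inl (one_sub_mul_pos hβ hu.2).ne'))) |>.sub
      (S.continuousOn_H.rpow_const fun u hu ↦ Or.inl (S.H_ne_zero hβ u hu)))
    (fun u hu ↦ by
      have hH := S.H_pos hβ u hu
      have hxu := one_sub_mul_pos hβ hu.2.le
      refine ((((hasDerivAt_one_sub_mul.rpow_const (p := mβ β + 1) (Or.inl hxu.ne')).const_sub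
        1).const_mul _).const_sub _).fun_sub ((S.hasDerivAt_H u hu).rpow_const
        (p := -(1 / 4)) (Or.inl hH.ne')) |>.congr_deriv ?_
      rw [add_sub_cancel_right, rpow_sub_one hH.ne']
      field_simp
      ring)
    (fun u hu ↦ by
      have hH := S.H_pos hβ u hu
      have hq := rpow_pos_of_pos hH (-(1 / 4))
      have h114 : ∀ a : ℝ, 0 < a → a ^ ((11 : ℝ) / 4) = a ^ 3 * a ^ (-(1 / 4) : ℝ) :=
        fun a ha ↦ by rw [← rpow_natCast, ← rpow_add ha]; norm_num
      have hF := S.exp_mul_rpow_eleven_quarters_lt hβ u hu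
      rw [h114 _ hH, h114 _ hβ] at hF
      have : deriv H u * H u ^ (-(1 / 4) : ℝ) / H u <
          3 * (exp (φ u) * (H u ^ 3 * H u ^ (-(1 / 4) : ℝ))) := by
        rw [div_lt_iff₀ hH]
        nlinarith [mul_lt_mul_of_pos_right (S.deriv_H_lt u hu) hq, mul_pos (pow_pos hH 2) hq]
      have e : -(3 / 4 * β ^ (-(1 / 4) : ℝ) * β ^ 3 * (1 - 3 * β ^ 3 * u) ^ mβ β) +
            1 / 4 * deriv H u * H u ^ (-(1 / 4) : ℝ) / H u =
          1 / 4 * (deriv H u * H u ^ (-(1 / 4) : ℝ) / H u) -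
            3 / 4 * (β ^ 3 * β ^ (-(1 / 4) : ℝ) * (1 - 3 * β ^ 3 * u) ^ mβ β) := by ring
      rw [e]
      linarith)
  simpa [S.H_zero] using this

theorem φ_lt_phiupper : ∀ t ∈ Ioo T₀ 0, φ t < phiupper β t := by
  have hγ := gammaβ_pos (β := β)
  intro t ht
  have := lt_of_hasDerivAt_neg ht (f := fun u ↦ phiupper β u - φ u)
    (f' := fun u ↦ -(√6 * gammaβ β / (1 - 3 * β ^ 3 * u)) -
      6 * β ^ 3 * (1 - 3 * β ^ 3 * u) ^ (4 * gammaβ β / β ^ 3) - deriv φ u)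
    (by
      have := S.continuousOn_φ
      have : ∀ u ∈ Ioc T₀ 0, 1 - 3 * β ^ 3 * u ≠ 0 := fun u hu ↦ (one_sub_mul_pos hβ hu.2).ne'
      have : ∀ u ∈ Ioc T₀ 0, 1 - 3 * β ^ 3 * u ≠ 0 ∨ 0 ≤ (4 * gammaβ β + β ^ 3) / β ^ 3 :=
        fun u hu ↦ Or.inl (one_sub_mul_pos hβ hu.2).ne'
      unfold phiupper
      fun_prop (disch := assumption))
    (fun u hu ↦ by
      have hxu := one_sub_mul_pos hβ hu.2.le
      refine (((hasDerivAt_one_sub_mul.log hxu.ne').const_mul _).fun_add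
        (((hasDerivAt_one_sub_mul.rpow_const (Or.inl hxu.ne')).sub_const 1).const_mul
        _)).fun_sub (S.hasDerivAt_φ u hu) |>.congr_deriv ?_
      rw [show (4 * gammaβ β + β ^ 3) / β ^ 3 - 1 = 4 * gammaβ β / β ^ 3 by
        field_simp [hβ.ne']; ring]
      field_simp
      ring)
    (fun u hu ↦ by
      have hH := mul_lt_mul_of_pos_left (S.lt_gammaβ_div hβ u hu) (by positivity : (0 : ℝ) < √6)
      rw [← mul_div_assoc] at hH
      linarith [S.neg_six_mul_sub_le_deriv_φ hβ u hu, S.exp_mul_pow_three_lt hβ u hu])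
  have h0 : phiupper β 0 = 0 := by simp [phiupper]
  linarith [S.φ_zero]

end PastSolution

lemma lt_rpow_neg_half_of_lt_inv_sq {h U : ℝ} (hh : 0 < h) (hU : 0 < U)
    (hlt : U < (h ^ 2)⁻¹) : h < U ^ (-(1 / 2) : ℝ) := by
  rw [rpow_neg hU.le, ← sqrt_eq_rpow, lt_inv_comm₀ hh (sqrt_pos.2 hU), sqrt_lt' (inv_pos.2 hh),
    inv_pow]
  exact hlt

lemma rpow_neg_four_lt_of_rpow_neg_quarter_lt {h Q : ℝ} (hh : 0 < h)
    (hlt : h ^ (-(1 / 4) : ℝ) < Q) : Q ^ (-4 : ℝ) < h := by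
  have := rpow_lt_rpow_of_neg (rpow_pos_of_pos hh _) hlt (by norm_num : (-4 : ℝ) < 0)
  rwa [← rpow_mul hh.le, show (-(1 / 4) : ℝ) * -4 = 1 by norm_num, rpow_one] at this

theorem stmt_14_general (T₀ β : ℝ) (H φ : ℝ → ℝ)
    (hsys : EdGB H φ (Set.Ioc T₀ 0))
    (h0 : H 0 = β) (hβ : 0 < β) (hφ0 : φ 0 = 0) (hφ'0 : deriv φ 0 < 0)
    (hD3 : ∀ t ∈ Set.Ioo T₀ 0,
      deriv H t - 3 * H t ^ 4 * Real.exp (φ t) + H t ^ 2 < 0)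
    (hD4 : ∀ t ∈ Set.Ioo T₀ 0,
      deriv H t - (12 / 5) * H t ^ 4 * Real.exp (φ t) + 3 * H t ^ 2 > 0) :
    ∀ t ∈ Set.Ioo T₀ 0,
      H t < Hupper β t ∧
      (H t > Hlower β t ∧ Hlower β t > 0) ∧
      (Real.log ((1 - 3 * β ^ 3 * t) ^ 2) < φ t ∧ φ t < phiupper β t) := by
  have S := PastSolution.of_edGB hsys h0 hφ0 hφ'0 hD3 hD4
  intro t ht
  have hH := S.H_pos hβ t ht
  have hQ := S.rpow_neg_quarter_lt hβ t ht
  refine ⟨lt_min ?_ (S.lt_gammaβ_div hβ t ht), ⟨rpow_neg_four_lt_of_rpow_neg_quarter_lt hH hQ,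
    rpow_pos_of_pos ((rpow_pos_of_pos hH _).trans hQ) _⟩, ?_, S.φ_lt_phiupper hβ t ht⟩
  · exact lt_rpow_neg_half_of_lt_inv_sq hH (invSqBound_pos hβ ht.2.le) (S.invSqBound_lt hβ t ht)
  · rw [log_pow]
    push_cast
    exact S.two_mul_log_lt hβ t ht

/-- Past-evolution bounds: if `(H, φ)` solves the EdGB FLRW system on `(T₀, 0]`
with `H(0) = β > 0`, `φ(0) = 0`, `φ'(0) < 0`, and the three sign conditions
`D₃ < 0`, `D₄ > 0`, `D₅ > 0` hold on `(T₀, 0)`, then for all `t ∈ (T₀, 0)`: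
`Hlower β t < H t < Hupper β t`, `0 < Hlower β t`, and
`ln((1 − 3β³t)²) < φ(t) < phiupper β t`. -/
theorem stmt_14 (T₀ β : ℝ) (hT₀ : T₀ < 0) (H φ : ℝ → ℝ)
    (hsys : EdGB H φ (Set.Ioc T₀ 0))
    (h0 : H 0 = β) (hβ : 0 < β) (hφ0 : φ 0 = 0) (hφ'0 : deriv φ 0 < 0)
    (hD3 : ∀ t ∈ Set.Ioo T₀ 0,
      deriv H t - 3 * H t ^ 4 * Real.exp (φ t) + H t ^ 2 < 0)
    (hD4 : ∀ t ∈ Set.Ioo T₀ 0,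
      deriv H t - (12 / 5) * H t ^ 4 * Real.exp (φ t) + 3 * H t ^ 2 > 0)
    (hD5 : ∀ t ∈ Set.Ioo T₀ 0,
      deriv H t - H t ^ 2 + 3 * Real.exp (-φ t) > 0) :
    ∀ t ∈ Set.Ioo T₀ 0,
      H t < Hupper β t ∧
      (H t > Hlower β t ∧ Hlower β t > 0) ∧
      (Real.log ((1 - 3 * β ^ 3 * t) ^ 2) < φ t ∧ φ t < phiupper β t) :=
  stmt_14_general T₀ β H φ hsys h0 hβ hφ0 hφ'0 hD3 hD4
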